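/- arXiv:2005.09528 — 5 statements merged into one kernel-verified Lean document; each statement's English description precedes it below -/
import Mathlib

section
/- Let X ∈ ℝ^{n×n} be Hurwitz and let Y, Z, ΔX, ΔY, ΔZ ∈ ℝ^{n×n} satisfy XᵀY + YX = −Z and (X+ΔX)ᵀ(Y+ΔY) + (Y+ΔY)(X+ΔX) = −(Z+ΔZ), with Z ≠ 0. Suppose γ > 0 satisfies ‖ΔX‖_F ≤ γ‖X‖_F, ‖ΔZ‖_F ≤ γ‖Z‖_F, and γ‖X‖_F · ‖𝒫(X)⁻¹‖₂ ≤ 1/4, where 𝒫(X) = Iₙ ⊗ Xᵀ + Xᵀ ⊗ Iₙ. Then ‖ΔY‖_F ≤ 8γ‖X‖_F · ‖𝒫(X)⁻¹‖₂ · ‖Y‖_F. -/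
open Matrix MeasureTheory Filter NormedSpace
open scoped Kronecker

noncomputable section

/-- A real square matrix is Hurwitz if every eigenvalue over `ℂ` has negative real part. -/
def IsHurwitz {n : Type*} [Fintype n] [DecidableEq n] (X : Matrix n n ℝ) : Prop :=
  ∀ μ ∈ spectrum ℂ (X.map (algebraMap ℝ ℂ)), μ.re < 0

/-- The Frobenius norm of a real matrix. -/
def frobNorm {p q : Type*} [Fintype p] [Fintype q] (X : Matrix p q ℝ) : ℝ :=
  Real.sqrt (∑ i, ∑ j, (X i j) ^ 2)

/-- The spectral (ℓ²-operator) norm of a real matrix. -/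
def spec2Norm {p q : Type*} [Fintype p] [Fintype q] [DecidableEq q] (X : Matrix p q ℝ) : ℝ :=
  ‖LinearMap.toContinuousLinearMap (Matrix.toEuclideanLin X)‖

/-!
Subtracting the two Lyapunov equations gives
`XᵀΔY + ΔY X = -(ΔZ + ΔXᵀ(Y + ΔY) + (Y + ΔY)ΔX)`.
Since `X` is Hurwitz, `Xᵀ` and `-X` have disjoint spectra, so by Sylvester's theorem
`W ↦ XᵀW + WX` is injective; its matrix on `vec W` is `𝒫(X)`, whence
`‖W‖_F ≤ ‖𝒫(X)⁻¹‖₂ ‖XᵀW + WX‖_F`. Bounding the right-hand side with the triangle inequality,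
submultiplicativity and `‖Z‖_F ≤ 2‖X‖_F‖Y‖_F` leaves a term `2γ‖X‖_F‖𝒫(X)⁻¹‖₂‖ΔY‖_F`,
at most `‖ΔY‖_F / 2` by the smallness assumption, which is absorbed into the left-hand side.
-/

open Polynomial in
theorem Matrix.aeval_mul_eq_mul_aeval {R m n : Type*} [CommSemiring R] [Fintype m] [Fintype n]
    [DecidableEq m] [DecidableEq n] {A : Matrix m m R} {C : Matrix n n R} {W : Matrix m n R}
    (h : A * W = W * C) (p : R[X]) : aeval A p * W = W * aeval C p := by
  have hpow (k : ℕ) : A ^ k * W = W * C ^ k := by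
    induction k with
    | zero => simp
    | succ k ih => rw [pow_succ, Matrix.mul_assoc, h, ← Matrix.mul_assoc, ih, pow_succ,
        Matrix.mul_assoc]
  induction p using Polynomial.induction_on' with
  | add p q hp hq => rw [map_add, map_add, Matrix.add_mul, Matrix.mul_add, hp, hq]
  | monomial k c =>
    simp only [aeval_monomial, Algebra.algebraMap_eq_smul_one, smul_mul_assoc, one_mul,
      Matrix.smul_mul, Matrix.mul_smul, hpow]

theorem Matrix.spectrum_transpose {R n : Type*} [CommRing R] [Fintype n] [DecidableEq n]
    (A : Matrix n n R) : spectrum R Aᵀ = spectrum R A := by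
  ext r
  simp only [spectrum.mem_iff, isUnit_iff_isUnit_det, ← det_transpose (_ - Aᵀ), transpose_sub,
    transpose_transpose, algebraMap_eq_diagonal, diagonal_transpose]

/-- Sylvester: `χ_C(A)` kills `W` by Cayley–Hamilton and is invertible by spectral mapping. -/
theorem Matrix.eq_zero_of_mul_eq_mul_of_disjoint_spectrum {K m n : Type*} [Field K]
    [IsAlgClosed K] [Fintype m] [Fintype n] [DecidableEq m] [DecidableEq n]
    {A : Matrix m m K} {C : Matrix n n K} {W : Matrix m n K} (h : A * W = W * C)
    (hAC : Disjoint (spectrum K A) (spectrum K C)) : W = 0 := by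
  cases isEmpty_or_nonempty n
  · exact Subsingleton.elim _ _
  have hdeg : 0 < C.charpoly.degree := by
    rw [charpoly_degree_eq_dim]
    exact_mod_cast Fintype.card_pos
  have hunit : IsUnit (Polynomial.aeval A C.charpoly) := by
    rw [← spectrum.zero_notMem_iff K, spectrum.map_polynomial_aeval_of_degree_pos _ _ hdeg]
    rintro ⟨μ, hμA, hμC⟩
    exact hAC.ne_of_mem hμA (mem_spectrum_iff_isRoot_charpoly.mpr hμC) rfl
  have hkill : Polynomial.aeval A C.charpoly * W = 0 := by
    rw [aeval_mul_eq_mul_aeval h, aeval_self_charpoly, Matrix.mul_zero]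
  obtain ⟨u, hu⟩ := hunit
  rw [← hu] at hkill
  calc W = (↑u⁻¹ * ↑u : Matrix m m K) * W := by rw [Units.inv_mul, Matrix.one_mul]
    _ = 0 := by rw [Matrix.mul_assoc, hkill, Matrix.mul_zero]

theorem IsHurwitz.eq_zero_of_transpose_mul_add_mul_eq_zero {ι : Type*} [Fintype ι]
    [DecidableEq ι] {X W : Matrix ι ι ℝ} (hX : IsHurwitz X) (h : Xᵀ * W + W * X = 0) :
    W = 0 := by
  set f := algebraMap ℝ ℂ
  have hWf : (X.map f)ᵀ * W.map f = W.map f * -X.map f := by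
    rw [Matrix.mul_neg, ← add_eq_zero_iff_eq_neg, ← transpose_map, ← RingHom.mapMatrix_apply,
      ← RingHom.mapMatrix_apply, ← RingHom.mapMatrix_apply, ← map_mul, ← map_mul, ← map_add, h,
      map_zero]
  have hdisj : Disjoint (spectrum ℂ (X.map f)ᵀ) (spectrum ℂ (-X.map f)) := by
    rw [spectrum_transpose, ← spectrum.neg_eq, Set.disjoint_left]
    intro μ hμ hμneg
    linarith [hX μ hμ, hX (-μ) (Set.mem_neg.mp hμneg), Complex.neg_re μ]
  have hWf0 := eq_zero_of_mul_eq_mul_of_disjoint_spectrum hWf hdisj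
  exact Matrix.map_injective (f := f) RCLike.ofReal_injective (by simpa using hWf0)

/-- `𝒫(X)`, the matrix of `W ↦ XᵀW + WX` in the coordinates `vec W`. -/
def lyapunovKronecker {R ι : Type*} [Semiring R] [DecidableEq ι] (X : Matrix ι ι R) :
    Matrix (ι × ι) (ι × ι) R :=
  1 ⊗ₖ Xᵀ + Xᵀ ⊗ₖ 1

theorem lyapunovKronecker_mulVec_vec {R ι : Type*} [CommSemiring R] [Fintype ι] [DecidableEq ι]
    (X W : Matrix ι ι R) : lyapunovKronecker X *ᵥ vec W = vec (Xᵀ * W + W * X) := by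
  rw [lyapunovKronecker, add_mulVec, kronecker_mulVec_vec, kronecker_mulVec_vec, transpose_one,
    transpose_transpose, Matrix.mul_one, Matrix.one_mul, vec_add]

theorem IsHurwitz.isUnit_lyapunovKronecker {ι : Type*} [Fintype ι] [DecidableEq ι]
    {X : Matrix ι ι ℝ} (hX : IsHurwitz X) : IsUnit (lyapunovKronecker X) := by
  rw [← mulVec_injective_iff_isUnit]
  intro v w hvw
  obtain ⟨V, rfl⟩ := vec_bijective.surjective v
  obtain ⟨W, rfl⟩ := vec_bijective.surjective w
  rw [lyapunovKronecker_mulVec_vec, lyapunovKronecker_mulVec_vec, vec_inj] at hvw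
  rw [vec_inj, ← sub_eq_zero]
  refine hX.eq_zero_of_transpose_mul_add_mul_eq_zero ?_
  rw [Matrix.mul_sub, Matrix.sub_mul, sub_add_sub_comm, hvw, sub_self]

theorem norm_toLp_mulVec_le_spec2Norm_mul {p q : Type*} [Fintype p] [Fintype q] [DecidableEq q]
    (M : Matrix p q ℝ) (v : q → ℝ) :
    ‖WithLp.toLp 2 (M *ᵥ v)‖ ≤ spec2Norm M * ‖WithLp.toLp 2 v‖ :=
  (LinearMap.toContinuousLinearMap (toEuclideanLin M)).le_opNorm (WithLp.toLp 2 v)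

theorem norm_toLp_le_spec2Norm_inv_mul {κ : Type*} [Fintype κ] [DecidableEq κ]
    {M : Matrix κ κ ℝ} (hM : IsUnit M) (v : κ → ℝ) :
    ‖WithLp.toLp 2 v‖ ≤ spec2Norm M⁻¹ * ‖WithLp.toLp 2 (M *ᵥ v)‖ := by
  simpa [mulVec_mulVec, nonsing_inv_mul M ((isUnit_iff_isUnit_det M).mp hM)]
    using norm_toLp_mulVec_le_spec2Norm_mul M⁻¹ (M *ᵥ v)

theorem frobNorm_nonneg {p q : Type*} [Fintype p] [Fintype q] (A : Matrix p q ℝ) :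
    0 ≤ frobNorm A :=
  Real.sqrt_nonneg _

theorem frobNorm_eq_norm_toLp_vec {p q : Type*} [Fintype p] [Fintype q] (A : Matrix p q ℝ) :
    frobNorm A = ‖WithLp.toLp 2 (vec A)‖ := by
  rw [EuclideanSpace.norm_eq, frobNorm, Fintype.sum_prod_type, Finset.sum_comm]
  simp [vec]

theorem IsHurwitz.frobNorm_le {ι : Type*} [Fintype ι] [DecidableEq ι] {X : Matrix ι ι ℝ}
    (hX : IsHurwitz X) (W : Matrix ι ι ℝ) :
    frobNorm W ≤ spec2Norm (lyapunovKronecker X)⁻¹ * frobNorm (Xᵀ * W + W * X) := by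
  simpa only [frobNorm_eq_norm_toLp_vec, lyapunovKronecker_mulVec_vec]
    using norm_toLp_le_spec2Norm_inv_mul hX.isUnit_lyapunovKronecker (vec W)

section Frobenius

attribute [local instance] Matrix.frobeniusSeminormedAddCommGroup

theorem frobNorm_eq_norm {p q : Type*} [Fintype p] [Fintype q] (A : Matrix p q ℝ) :
    frobNorm A = ‖A‖ := by
  simp only [frobNorm, frobenius_norm_def, Real.norm_eq_abs, sq_abs, Real.sqrt_eq_rpow,
    Real.rpow_two]

theorem frobNorm_transpose_mul_add_mul_le {ι : Type*} [Fintype ι] (X W : Matrix ι ι ℝ) :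
    frobNorm (Xᵀ * W + W * X) ≤ 2 * frobNorm X * frobNorm W := by
  simp only [frobNorm_eq_norm]
  calc ‖Xᵀ * W + W * X‖ ≤ ‖Xᵀ‖ * ‖W‖ + ‖W‖ * ‖X‖ :=
        (norm_add_le _ _).trans (add_le_add (frobenius_norm_mul _ _) (frobenius_norm_mul _ _))
    _ = 2 * ‖X‖ * ‖W‖ := by rw [frobenius_norm_transpose]; ring

theorem frobNorm_neg {p q : Type*} [Fintype p] [Fintype q] (A : Matrix p q ℝ) :
    frobNorm (-A) = frobNorm A := by
  simp only [frobNorm_eq_norm, norm_neg]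

theorem frobNorm_add_le {p q : Type*} [Fintype p] [Fintype q] (A B : Matrix p q ℝ) :
    frobNorm (A + B) ≤ frobNorm A + frobNorm B := by
  simpa only [frobNorm_eq_norm] using norm_add_le A B

end Frobenius

theorem lyapunov_perturbation_residual {R ι : Type*} [CommRing R] [Fintype ι]
    {X Y Z ΔX ΔY ΔZ : Matrix ι ι R} (hYZ : Xᵀ * Y + Y * X = -Z)
    (hpert : (X + ΔX)ᵀ * (Y + ΔY) + (Y + ΔY) * (X + ΔX) = -(Z + ΔZ)) :
    Xᵀ * ΔY + ΔY * X = -(ΔZ + (ΔXᵀ * (Y + ΔY) + (Y + ΔY) * ΔX)) := by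
  rw [transpose_add] at hpert
  linear_combination (norm := noncomm_ring) hpert - hYZ

attribute [local instance] Matrix.normedAddCommGroup Matrix.normedSpace

theorem lyapunov_perturbation_frobenius_bound_general
    (n : ℕ) (X Y Z ΔX ΔY ΔZ : Matrix (Fin n) (Fin n) ℝ)
    (hX : IsHurwitz X)
    (hYZ : Xᵀ * Y + Y * X = -Z)
    (hpert : (X + ΔX)ᵀ * (Y + ΔY) + (Y + ΔY) * (X + ΔX) = -(Z + ΔZ))
    (γ : ℝ) (hγ : 0 < γ)
    (hX' : frobNorm ΔX ≤ γ * frobNorm X)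
    (hZ' : frobNorm ΔZ ≤ γ * frobNorm Z)
    (hsmall : γ * frobNorm X
        * spec2Norm ((1 : Matrix (Fin n) (Fin n) ℝ) ⊗ₖ Xᵀ
            + Xᵀ ⊗ₖ (1 : Matrix (Fin n) (Fin n) ℝ))⁻¹ ≤ 1 / 4) :
    frobNorm ΔY
      ≤ 8 * γ * frobNorm X
          * spec2Norm ((1 : Matrix (Fin n) (Fin n) ℝ) ⊗ₖ Xᵀ
              + Xᵀ ⊗ₖ (1 : Matrix (Fin n) (Fin n) ℝ))⁻¹
          * frobNorm Y := by
  change _ ≤ 8 * γ * _ * spec2Norm (lyapunovKronecker X)⁻¹ * _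
  change _ * spec2Norm (lyapunovKronecker X)⁻¹ ≤ _ at hsmall
  set c := spec2Norm (lyapunovKronecker X)⁻¹
  have hc : 0 ≤ c := norm_nonneg _
  have hX0 := frobNorm_nonneg X
  have hΔY0 := frobNorm_nonneg ΔY
  have hZ : frobNorm Z ≤ 2 * frobNorm X * frobNorm Y := by
    rw [← neg_neg Z, frobNorm_neg, ← hYZ]
    exact frobNorm_transpose_mul_add_mul_le X Y
  have hΔY : frobNorm ΔY
      ≤ c * (γ * (2 * frobNorm X * frobNorm Y)
          + 2 * (γ * frobNorm X) * (frobNorm Y + frobNorm ΔY)) := calc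
    frobNorm ΔY ≤ c * frobNorm (Xᵀ * ΔY + ΔY * X) := hX.frobNorm_le ΔY
    _ = c * frobNorm (ΔZ + (ΔXᵀ * (Y + ΔY) + (Y + ΔY) * ΔX)) := by
      rw [lyapunov_perturbation_residual hYZ hpert, frobNorm_neg]
    _ ≤ c * (frobNorm ΔZ + 2 * frobNorm ΔX * frobNorm (Y + ΔY)) := by
      grw [frobNorm_add_le, frobNorm_transpose_mul_add_mul_le]
    _ ≤ _ := by
      grw [hZ', hZ, hX', frobNorm_add_le]
      exact frobNorm_nonneg _
  -- with `κ = γ‖X‖_F c ≤ 1/4` this reads `‖ΔY‖_F ≤ 4κ‖Y‖_F + ‖ΔY‖_F / 2`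
  nlinarith [mul_le_mul_of_nonneg_right hsmall hΔY0]

/-- relative perturbation bound for Lyapunov equations, in the Frobenius norm. -/
theorem lyapunov_perturbation_frobenius_bound
    (n : ℕ) (hn : 0 < n) (X Y Z ΔX ΔY ΔZ : Matrix (Fin n) (Fin n) ℝ)
    (hX : IsHurwitz X)
    (hYZ : Xᵀ * Y + Y * X = -Z)
    (hpert : (X + ΔX)ᵀ * (Y + ΔY) + (Y + ΔY) * (X + ΔX) = -(Z + ΔZ))
    (hZ : Z ≠ 0) (γ : ℝ) (hγ : 0 < γ)
    (hX' : frobNorm ΔX ≤ γ * frobNorm X)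
    (hZ' : frobNorm ΔZ ≤ γ * frobNorm Z)
    (hsmall : γ * frobNorm X
        * spec2Norm ((1 : Matrix (Fin n) (Fin n) ℝ) ⊗ₖ Xᵀ
            + Xᵀ ⊗ₖ (1 : Matrix (Fin n) (Fin n) ℝ))⁻¹ ≤ 1 / 4) :
    frobNorm ΔY
      ≤ 8 * γ * frobNorm X
          * spec2Norm ((1 : Matrix (Fin n) (Fin n) ℝ) ⊗ₖ Xᵀ
              + Xᵀ ⊗ₖ (1 : Matrix (Fin n) (Fin n) ℝ))⁻¹
          * frobNorm Y :=
  lyapunov_perturbation_frobenius_bound_general n X Y Z ΔX ΔY ΔZ hX hYZ hpert γ hγ hX' hZ' hsmall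
end
end

section
/- Let X ∈ ℝ^{n×n} be Hurwitz and let Y₁, Y₂ ∈ ℝ^{n×n} be symmetric. If L_X(Y₂) − L_X(Y₁) is positive semidefinite (i.e. L_X(Y₁) ≤ L_X(Y₂) in the Loewner order), then Y₁ − Y₂ is positive semidefinite (i.e. Y₁ ≥ Y₂). -/
open Matrix MeasureTheory Filter NormedSpace
open scoped Kronecker

noncomputable section

/-!
With `Z = Y₁ - Y₂` and `Q = L_X(Y₂) - L_X(Y₁) ≥ 0` we have `XᵀZ + ZX = -Q`. Along a trajectory
`w t = exp (t • X) *ᵥ v` the quadratic form `w ⬝ᵥ Z *ᵥ w` has derivative `-(w ⬝ᵥ Q *ᵥ w) ≤ 0`, so it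
is antitone, and it tends to `0` because `X` is Hurwitz: on a generalized eigenvector for `μ`,
`exp (t • X) *ᵥ v` is `exp (t μ)` times a polynomial in `t`. Hence `v ⬝ᵥ Z *ᵥ v ≥ 0`.
-/

section

open Finset Topology

attribute [local instance] Matrix.linftyOpNormedAddCommGroup Matrix.linftyOpNormedRing
  Matrix.linftyOpNormedAlgebra

variable {ι : Type*} [Fintype ι] [DecidableEq ι]

theorem Complex.tendsto_exp_mul_mul_pow_atTop_nhds_zero {μ : ℂ} (hμ : μ.re < 0) (k : ℕ) :
    Tendsto (fun t : ℝ => Complex.exp (t * μ) * (t : ℂ) ^ k) atTop (𝓝 0) := by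
  rw [tendsto_zero_iff_norm_tendsto_zero]
  refine (tendsto_rpow_mul_exp_neg_mul_atTop_nhds_zero k (-μ.re) (by linarith)).congr' ?_
  filter_upwards [eventually_ge_atTop 0] with t ht
  rw [norm_mul, Complex.norm_exp, norm_pow, Complex.norm_real, Real.norm_of_nonneg ht,
    Real.rpow_natCast]
  simp [mul_comm]

theorem Matrix.exp_mulVec_eq_sum_of_pow_mulVec_eq_zero {𝕂 : Type*} [RCLike 𝕂]
    {N : Matrix ι ι 𝕂} {v : ι → 𝕂} {K : ℕ} (hv : N ^ K *ᵥ v = 0) :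
    exp N *ᵥ v = ∑ k ∈ range K, (k.factorial : 𝕂)⁻¹ • (N ^ k *ᵥ v) := by
  have hsum : HasSum (fun k => (k.factorial : 𝕂)⁻¹ • (N ^ k *ᵥ v)) (exp N *ᵥ v) := by
    simp only [← smul_mulVec]
    exact (exp_series_hasSum_exp' (𝕂 := 𝕂) N).map (mulVec.addMonoidHomLeft v)
      (continuous_id.matrix_mulVec continuous_const)
  refine hsum.unique (hasSum_sum_of_ne_finset_zero fun k hk => ?_)
  obtain ⟨j, rfl⟩ := Nat.exists_eq_add_of_le (not_lt.1 (mem_range.not.1 hk))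
  rw [add_comm, pow_add, ← mulVec_mulVec, hv, mulVec_zero, smul_zero]

theorem Matrix.tendsto_exp_smul_mulVec_of_pow_sub_smul_mulVec_eq_zero {B : Matrix ι ι ℂ} {μ : ℂ}
    (hμ : μ.re < 0) {K : ℕ} {v : ι → ℂ} (hv : (B - μ • 1) ^ K *ᵥ v = 0) :
    Tendsto (fun t : ℝ => exp ((t : ℂ) • B) *ᵥ v) atTop (𝓝 0) := by
  set N := B - μ • 1
  have hexp (t : ℝ) : exp ((t : ℂ) • B) *ᵥ v =
      ∑ k ∈ range K, (Complex.exp (t * μ) * (t : ℂ) ^ k * (k.factorial : ℂ)⁻¹) • (N ^ k *ᵥ v) := by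
    have hsplit : (t : ℂ) • B = algebraMap ℂ _ (t * μ) + (t : ℂ) • N := by
      simp [N, Algebra.algebraMap_eq_smul_one, smul_sub, smul_smul]
    have htN : ((t : ℂ) • N) ^ K *ᵥ v = 0 := by rw [smul_pow, smul_mulVec, hv, smul_zero]
    have hscalar : exp (algebraMap ℂ (Matrix ι ι ℂ) (t * μ)) = algebraMap ℂ _ (exp (t * μ)) :=
      (algebraMap_exp_comm _).symm
    rw [hsplit, Matrix.exp_add_of_commute _ _ (Algebra.commute_algebraMap_left _ _), hscalar,
      ← mulVec_mulVec, exp_mulVec_eq_sum_of_pow_mulVec_eq_zero htN,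
      Algebra.algebraMap_eq_smul_one, smul_mulVec, one_mulVec, smul_sum]
    refine sum_congr rfl fun k _ => ?_
    rw [smul_pow, smul_mulVec, smul_smul, smul_smul, Complex.exp_eq_exp_ℂ]
    ring_nf
  rw [show (0 : ι → ℂ) = ∑ k ∈ range K, (0 : ℂ) • (N ^ k *ᵥ v) by simp]
  refine (tendsto_finsetSum _ fun k _ => ?_).congr fun t => (hexp t).symm
  simpa using ((Complex.tendsto_exp_mul_mul_pow_atTop_nhds_zero hμ k).mul_const
    (k.factorial : ℂ)⁻¹).smul_const (N ^ k *ᵥ v)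

theorem Matrix.tendsto_exp_smul_mulVec_of_forall_re_neg {B : Matrix ι ι ℂ}
    (hB : ∀ μ ∈ spectrum ℂ B, μ.re < 0) (v : ι → ℂ) :
    Tendsto (fun t : ℝ => exp ((t : ℂ) • B) *ᵥ v) atTop (𝓝 0) := by
  set f : Module.End ℂ (ι → ℂ) := toLinAlgEquiv' B with hf
  have hv : v ∈ ⨆ μ, f.maxGenEigenspace μ := by
    rw [Module.End.iSup_maxGenEigenspace_eq_top]; trivial
  induction hv using Submodule.iSup_induction' with
  | mem μ x hx =>
    obtain ⟨k, hk⟩ := (Module.End.mem_maxGenEigenspace _ _ _).1 hx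
    have hkB : (B - μ • 1) ^ k *ᵥ x = 0 := by
      rwa [hf, ← map_one toLinAlgEquiv', ← map_smul, ← map_sub, ← map_pow] at hk
    rcases eq_or_ne x 0 with rfl | hx0
    · simp
    have hμ : f.HasEigenvalue μ := Module.End.hasEigenvalue_of_hasGenEigenvalue (k := k)
      (Submodule.ne_bot_iff _ |>.2 ⟨x, Module.End.mem_genEigenspace_nat.2 hk, hx0⟩)
    have hμB : μ ∈ spectrum ℂ B := by simpa [f] using hμ.mem_spectrum
    exact tendsto_exp_smul_mulVec_of_pow_sub_smul_mulVec_eq_zero (hB μ hμB) hkB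
  | zero => simp
  | add x y _ _ hx hy => simpa [mulVec_add] using hx.add hy

theorem IsHurwitz.tendsto_exp_smul_mulVec {X : Matrix ι ι ℝ} (hX : IsHurwitz X) (v : ι → ℝ) :
    Tendsto (fun t : ℝ => exp (t • X) *ᵥ v) atTop (𝓝 0) := by
  have hφ (t : ℝ) : (exp (t • X)).map (algebraMap ℝ ℂ) =
      exp ((t : ℂ) • X.map (algebraMap ℝ ℂ)) := by
    have h : (algebraMap ℝ ℂ).mapMatrix (exp (t • X)) =
        exp ((algebraMap ℝ ℂ).mapMatrix (t • X)) :=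
      map_exp _ (continuous_id.matrix_map Complex.continuous_ofReal) _
    rw [← RingHom.mapMatrix_apply, h]
    congr 1
    ext
    simp
  have hre : Continuous fun w : ι → ℂ => fun i => (w i).re := by fun_prop
  have hlim := (hre.tendsto' 0 0 (funext fun _ => Complex.zero_re)).comp
    (tendsto_exp_smul_mulVec_of_forall_re_neg hX (algebraMap ℝ ℂ ∘ v))
  refine hlim.congr fun t => funext fun i => ?_
  rw [Function.comp_apply, ← hφ t, ← RingHom.map_mulVec, Complex.coe_algebraMap, Complex.ofReal_re]

theorem Matrix.hasDerivAt_exp_smul_transpose_mul_mul_exp_smul {𝕂 : Type*} [RCLike 𝕂]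
    (X Z : Matrix ι ι 𝕂) (t : 𝕂) :
    HasDerivAt (fun s : 𝕂 => exp (s • Xᵀ) * Z * exp (s • X))
      (exp (t • Xᵀ) * (Xᵀ * Z + Z * X) * exp (t • X)) t := by
  rw [show exp (t • Xᵀ) * (Xᵀ * Z + Z * X) * exp (t • X) =
      exp (t • Xᵀ) * Xᵀ * Z * exp (t • X) + exp (t • Xᵀ) * Z * (X * exp (t • X)) by noncomm_ring]
  exact ((hasDerivAt_exp_smul_const Xᵀ t).mul_const Z).mul (hasDerivAt_exp_smul_const' X t)

theorem Matrix.antitone_dotProduct_mulVec_of_hasDerivAt {F F' : ℝ → Matrix ι ι ℝ}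
    (hF : ∀ t, HasDerivAt F (F' t) t) (hF' : ∀ t, (-F' t).PosSemidef) (v : ι → ℝ) :
    Antitone fun t => v ⬝ᵥ F t *ᵥ v := by
  let q : Matrix ι ι ℝ →L[ℝ] ℝ := LinearMap.toContinuousLinearMap
    { toFun := fun M => v ⬝ᵥ M *ᵥ v
      map_add' := fun M N => by simp [add_mulVec]
      map_smul' := fun c M => by simp [smul_mulVec] }
  refine antitone_of_hasDerivAt_nonpos (fun t => q.hasFDerivAt.comp_hasDerivAt t (hF t))
    fun t => ?_
  have h := (hF' t).dotProduct_mulVec_nonneg v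
  rw [neg_mulVec, dotProduct_neg, neg_nonneg] at h
  exact h

theorem IsHurwitz.posSemidef_of_transpose_mul_add_mul_eq_neg {X Z Q : Matrix ι ι ℝ}
    (hX : IsHurwitz X) (hZ : Z.IsSymm) (hQ : Q.PosSemidef) (hXZ : Xᵀ * Z + Z * X = -Q) :
    Z.PosSemidef := by
  refine posSemidef_iff_dotProduct_mulVec.2 ⟨hZ, fun v => ?_⟩
  set q := fun t : ℝ => (exp (t • X) *ᵥ v) ⬝ᵥ Z *ᵥ (exp (t • X) *ᵥ v)
  have hq : q = fun t => v ⬝ᵥ (exp (t • Xᵀ) * Z * exp (t • X)) *ᵥ v := by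
    funext t
    rw [← transpose_smul, exp_transpose, ← mulVec_mulVec, ← mulVec_mulVec, dotProduct_mulVec,
      vecMul_transpose]
  have hanti : Antitone q := by
    rw [hq]
    refine antitone_dotProduct_mulVec_of_hasDerivAt
      (fun t => hasDerivAt_exp_smul_transpose_mul_mul_exp_smul X Z t) (fun t => ?_) v
    rw [hXZ, mul_neg, neg_mul, neg_neg, ← transpose_smul, exp_transpose,
      ← conjTranspose_eq_transpose_of_trivial]
    exact hQ.conjTranspose_mul_mul_same _
  have hlim : Tendsto q atTop (𝓝 0) := by
    have hcont : Continuous fun w : ι → ℝ => w ⬝ᵥ Z *ᵥ w := by fun_prop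
    simpa [q, Function.comp_def] using (hcont.tendsto 0).comp (hX.tendsto_exp_smul_mulVec v)
  have h0 : 0 ≤ q 0 := le_of_tendsto hlim (eventually_ge_atTop 0 |>.mono fun t ht => hanti ht)
  simpa [q] using h0

end

attribute [local instance] Matrix.normedAddCommGroup Matrix.normedSpace

theorem lyapunov_operator_monotone_general
    (n : ℕ) (X Y₁ Y₂ : Matrix (Fin n) (Fin n) ℝ)
    (hX : IsHurwitz X) (hY₁ : Y₁.IsSymm) (hY₂ : Y₂.IsSymm)
    (h : ((Xᵀ * Y₂ + Y₂ * X) - (Xᵀ * Y₁ + Y₁ * X)).PosSemidef) :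
    (Y₁ - Y₂).PosSemidef :=
  hX.posSemidef_of_transpose_mul_add_mul_eq_neg (hY₁.sub hY₂) h (by noncomm_ring)

/-- the inverse Lyapunov operator of a Hurwitz matrix reverses the
Loewner order on symmetric matrices. -/
theorem lyapunov_operator_monotone
    (n : ℕ) (hn : 0 < n) (X Y₁ Y₂ : Matrix (Fin n) (Fin n) ℝ)
    (hX : IsHurwitz X) (hY₁ : Y₁.IsSymm) (hY₂ : Y₂.IsSymm)
    (h : ((Xᵀ * Y₂ + Y₂ * X) - (Xᵀ * Y₁ + Y₁ * X)).PosSemidef) :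
    (Y₁ - Y₂).PosSemidef :=
  lyapunov_operator_monotone_general n X Y₁ Y₂ hX hY₁ hY₂ h
end
end

section
/- Let P ∈ ℝ^{n×n} be symmetric with 𝒜(P) = A − B R⁻¹ Bᵀ P Hurwitz, and let P' be the unique symmetric solution of the Lyapunov equation 𝒜(P)ᵀP' + P'𝒜(P) = −(Q + P B R⁻¹ Bᵀ P). Then ‖P' − P*‖_F ≤ ‖𝒫(𝒜(P))⁻¹‖₂ · ‖B R⁻¹ Bᵀ‖_F · ‖P − P*‖_F², where 𝒫(X) = Iₙ ⊗ Xᵀ + Xᵀ ⊗ Iₙ. -/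
open Matrix MeasureTheory Filter NormedSpace
open scoped Kronecker

noncomputable section

/-!
Put `S = B R⁻¹ Bᵀ` and `X = 𝒜(P) = A - S P`. Subtracting the Riccati equation from the Lyapunov
equation defining `P'` shows that the error `E = P' - P*` solves `XᵀE + EX = -(P - P*) S (P - P*)`,
i.e. `𝒫(X) vec E = -vec ((P - P*) S (P - P*))`. The matrix `𝒫(X)` is invertible: its kernel consists
of the solutions of the Sylvester equation `XᵀY = Y(-X)`, which vanish because `Xᵀ` and `-X` have
disjoint spectra when `X` is Hurwitz. As the Frobenius norm is the Euclidean norm of `vec` and is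
submultiplicative, `‖E‖_F ≤ ‖𝒫(X)⁻¹‖₂ ‖(P - P*) S (P - P*)‖_F ≤ ‖𝒫(X)⁻¹‖₂ ‖S‖_F ‖P - P*‖_F²`.
-/

section Norms

variable {l m n : Type*} [Fintype l] [Fintype m] [Fintype n]

section Frobenius

attribute [local instance] Matrix.frobeniusSeminormedAddCommGroup

theorem frobNorm_eq_norm_s5 (X : Matrix m n ℝ) : frobNorm X = ‖X‖ := by
  simp only [frobNorm, frobenius_norm_def, Real.norm_eq_abs, sq_abs, Real.sqrt_eq_rpow,
    Real.rpow_two]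

theorem frobNorm_mul_mul_le {k : Type*} [Fintype k] (X : Matrix k l ℝ) (Y : Matrix l m ℝ)
    (Z : Matrix m n ℝ) : frobNorm (X * Y * Z) ≤ frobNorm X * frobNorm Y * frobNorm Z := by
  simpa only [frobNorm_eq_norm_s5] using (frobenius_norm_mul (X * Y) Z).trans
    (mul_le_mul_of_nonneg_right (frobenius_norm_mul X Y) (norm_nonneg Z))

end Frobenius

theorem frobNorm_neg_s5 (X : Matrix m n ℝ) : frobNorm (-X) = frobNorm X := by
  simp only [frobNorm, Matrix.neg_apply, neg_sq]

theorem frobNorm_eq_norm_vec (X : Matrix m n ℝ) : frobNorm X = ‖WithLp.toLp 2 (vec X)‖ := by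
  rw [EuclideanSpace.norm_eq, frobNorm, Fintype.sum_prod_type, Finset.sum_comm]
  simp only [vec, Real.norm_eq_abs, sq_abs]

theorem norm_mulVec_le_spec2Norm [DecidableEq n] (M : Matrix m n ℝ) (v : n → ℝ) :
    ‖WithLp.toLp 2 (M *ᵥ v)‖ ≤ spec2Norm M * ‖WithLp.toLp 2 v‖ :=
  (LinearMap.toContinuousLinearMap (toEuclideanLin M)).le_opNorm (WithLp.toLp 2 v)

theorem frobNorm_le_spec2Norm_mul_frobNorm {m' n' : Type*} [Fintype m'] [Fintype n']
    [DecidableEq (n' × m')] {Y : Matrix m n ℝ} {Z : Matrix m' n' ℝ}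
    (M : Matrix (n × m) (n' × m') ℝ) (h : vec Y = M *ᵥ vec Z) :
    frobNorm Y ≤ spec2Norm M * frobNorm Z := by
  simpa only [frobNorm_eq_norm_vec, h] using norm_mulVec_le_spec2Norm M (vec Z)

end Norms

section Sylvester

open Polynomial

variable {K m n : Type*} [Field K] [Fintype m] [DecidableEq m] [Fintype n] [DecidableEq n]

theorem Matrix.aeval_mul_eq_mul_aeval_s5 {A : Matrix m m K} {B : Matrix n n K} {Y : Matrix m n K}
    (hY : A * Y = Y * B) (p : K[X]) : aeval A p * Y = Y * aeval B p := by
  have hpow (k : ℕ) : A ^ k * Y = Y * B ^ k := by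
    induction k with
    | zero => simp
    | succ k ih => rw [pow_succ, Matrix.mul_assoc, hY, ← Matrix.mul_assoc, ih, Matrix.mul_assoc,
        ← pow_succ]
  induction p using Polynomial.induction_on' with
  | add p q hp hq => rw [map_add, map_add, Matrix.add_mul, Matrix.mul_add, hp, hq]
  | monomial k a =>
    rw [aeval_monomial, aeval_monomial, ← Algebra.smul_def, ← Algebra.smul_def, Matrix.smul_mul,
      Matrix.mul_smul, hpow]

theorem Matrix.eq_zero_of_mul_eq_mul_of_disjoint_spectrum_s5 [IsAlgClosed K]
    {A : Matrix m m K} {B : Matrix n n K} {Y : Matrix m n K}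
    (hAB : Disjoint (spectrum K A) (spectrum K B)) (hY : A * Y = Y * B) : Y = 0 := by
  cases isEmpty_or_nonempty m
  · exact Subsingleton.elim _ _
  -- `χ_A(B)` is invertible: its spectrum `χ_A(σ B)` avoids `0` because `σ A ∩ σ B = ∅`.
  have hunit : IsUnit (aeval B A.charpoly).det := by
    rw [← isUnit_iff_isUnit_det]
    by_contra h
    rw [← spectrum.zero_mem_iff K, spectrum.map_polynomial_aeval_of_degree_pos B _
      (by rw [charpoly_degree_eq_dim]; exact_mod_cast Fintype.card_pos)] at h
    obtain ⟨μ, hμB, hμA⟩ := h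
    exact hAB.ne_of_mem (mem_spectrum_iff_isRoot_charpoly.mpr hμA) hμB rfl
  have hker : Y * aeval B A.charpoly = 0 := by
    rw [← aeval_mul_eq_mul_aeval_s5 hY, aeval_self_charpoly, Matrix.zero_mul]
  rw [← Matrix.mul_nonsing_inv_cancel_right _ Y hunit, hker, Matrix.zero_mul]

end Sylvester

section Lyapunov

variable {n : Type*} [Fintype n] [DecidableEq n]

theorem IsHurwitz.eq_zero_of_lyapunov_eq_zero {X Y : Matrix n n ℝ} (hX : IsHurwitz X)
    (h : Xᵀ * Y + Y * X = 0) : Y = 0 := by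
  set f := algebraMap ℝ ℂ
  have hC : (X.map f)ᵀ * Y.map f = Y.map f * -X.map f := by
    rw [Matrix.mul_neg, eq_neg_iff_add_eq_zero, ← transpose_map, ← Matrix.map_mul,
      ← Matrix.map_mul, ← Matrix.map_add f (map_add f), h, Matrix.map_zero f (map_zero f)]
  have hdisj : Disjoint (spectrum ℂ (X.map f)ᵀ) (spectrum ℂ (-X.map f)) := by
    refine Set.disjoint_left.mpr fun μ hμ hμ' => ?_
    rw [mem_spectrum_iff_isRoot_charpoly, charpoly_transpose,
      ← mem_spectrum_iff_isRoot_charpoly] at hμ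
    rw [← spectrum.neg_eq, Set.mem_neg] at hμ'
    have := hX (-μ) hμ'
    rw [Complex.neg_re] at this
    linarith [hX μ hμ]
  have hYC := eq_zero_of_mul_eq_mul_of_disjoint_spectrum_s5 hdisj hC
  exact Matrix.map_injective f.injective (hYC.trans (Matrix.map_zero f (map_zero f)).symm)

variable {R : Type*} [CommRing R]

/-- The paper's `𝒫(X)`: the matrix of `Y ↦ XᵀY + YX` in the coordinates `Matrix.vec`. -/
def lyapunovKron (X : Matrix n n R) : Matrix (n × n) (n × n) R := 1 ⊗ₖ Xᵀ + Xᵀ ⊗ₖ 1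

theorem lyapunovKron_mulVec_vec (X Y : Matrix n n R) :
    lyapunovKron X *ᵥ vec Y = vec (Xᵀ * Y + Y * X) := by
  rw [lyapunovKron, add_mulVec, kronecker_mulVec_vec, kronecker_mulVec_vec, vec_add,
    transpose_one, transpose_transpose, Matrix.mul_one, Matrix.one_mul]

theorem IsHurwitz.isUnit_det_lyapunovKron {X : Matrix n n ℝ} (hX : IsHurwitz X) :
    IsUnit (lyapunovKron X).det := by
  rw [isUnit_iff_ne_zero]
  intro hdet
  obtain ⟨v, hv, hker⟩ := exists_mulVec_eq_zero_iff.mpr hdet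
  obtain ⟨Y, rfl⟩ := vec_bijective.surjective v
  rw [lyapunovKron_mulVec_vec, vec_eq_zero_iff] at hker
  exact hv (by rw [hX.eq_zero_of_lyapunov_eq_zero hker, vec_zero])

theorem IsHurwitz.vec_eq_lyapunovKron_inv_mulVec {X Y Z : Matrix n n ℝ} (hX : IsHurwitz X)
    (h : Xᵀ * Y + Y * X = Z) : vec Y = (lyapunovKron X)⁻¹ *ᵥ vec Z := by
  rw [← h, ← lyapunovKron_mulVec_vec, mulVec_mulVec,
    nonsing_inv_mul _ hX.isUnit_det_lyapunovKron, one_mulVec]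

end Lyapunov

theorem lyapunov_sub_of_riccati {n R : Type*} [Fintype n] [DecidableEq n] [CommRing R]
    {A S Q P P' P₀ : Matrix n n R} (hP : P.IsSymm) (hS : S.IsSymm)
    (hLyap : (A - S * P)ᵀ * P' + P' * (A - S * P) = -(Q + P * S * P))
    (hARE : Aᵀ * P₀ + P₀ * A - P₀ * S * P₀ + Q = 0) :
    (A - S * P)ᵀ * (P' - P₀) + (P' - P₀) * (A - S * P) = -((P - P₀) * S * (P - P₀)) := by
  rw [transpose_sub, transpose_mul, hP.eq, hS.eq] at hLyap ⊢
  calc _ = (Aᵀ - P * S) * P' + P' * (A - S * P) + (Q + P * S * P)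
        - (Aᵀ * P₀ + P₀ * A - P₀ * S * P₀ + Q) - (P - P₀) * S * (P - P₀) := by noncomm_ring
    _ = _ := by rw [hLyap, hARE]; noncomm_ring

attribute [local instance] Matrix.normedAddCommGroup Matrix.normedSpace

theorem kleinman_step_quadratic_bound_general
    (n m : ℕ)
    (A : Matrix (Fin n) (Fin n) ℝ) (B : Matrix (Fin n) (Fin m) ℝ)
    (Q : Matrix (Fin n) (Fin n) ℝ) (R : Matrix (Fin m) (Fin m) ℝ)
    (hR : R.PosDef)
    (Pstar : Matrix (Fin n) (Fin n) ℝ)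
    (hARE : Aᵀ * Pstar + Pstar * A - Pstar * B * R⁻¹ * Bᵀ * Pstar + Q = 0)
    (P P' : Matrix (Fin n) (Fin n) ℝ) (hP : P.IsSymm)
    (hHur : IsHurwitz (A - B * R⁻¹ * Bᵀ * P))
    (hLyap : (A - B * R⁻¹ * Bᵀ * P)ᵀ * P' + P' * (A - B * R⁻¹ * Bᵀ * P)
        = -(Q + P * B * R⁻¹ * Bᵀ * P)) :
    frobNorm (P' - Pstar)
      ≤ spec2Norm ((1 : Matrix (Fin n) (Fin n) ℝ) ⊗ₖ (A - B * R⁻¹ * Bᵀ * P)ᵀ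
            + (A - B * R⁻¹ * Bᵀ * P)ᵀ ⊗ₖ (1 : Matrix (Fin n) (Fin n) ℝ))⁻¹
          * frobNorm (B * R⁻¹ * Bᵀ) * frobNorm (P - Pstar) ^ 2 := by
  set S := B * R⁻¹ * Bᵀ
  have hS : S.IsSymm := by
    have hRT : Rᵀ = R := by simpa using hR.isHermitian.eq
    simp only [S, IsSymm, transpose_mul, transpose_transpose, Matrix.mul_assoc,
      transpose_nonsing_inv, hRT]
  have hError := lyapunov_sub_of_riccati hP hS (by simpa only [S, Matrix.mul_assoc] using hLyap)
    (by simpa only [S, Matrix.mul_assoc] using hARE)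
  set X := A - S * P
  calc frobNorm (P' - Pstar)
      ≤ spec2Norm (lyapunovKron X)⁻¹ * frobNorm (-((P - Pstar) * S * (P - Pstar))) :=
        frobNorm_le_spec2Norm_mul_frobNorm _ (hHur.vec_eq_lyapunovKron_inv_mulVec hError)
    _ ≤ spec2Norm (lyapunovKron X)⁻¹
          * (frobNorm (P - Pstar) * frobNorm S * frobNorm (P - Pstar)) := by
        rw [frobNorm_neg_s5]
        exact mul_le_mul_of_nonneg_left (frobNorm_mul_mul_le _ _ _) (norm_nonneg _)
    _ = spec2Norm (lyapunovKron X)⁻¹ * frobNorm S * frobNorm (P - Pstar) ^ 2 := by ring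

/-- one-step quadratic convergence estimate for the exact Kleinman iteration. -/
theorem kleinman_step_quadratic_bound
    (n m : ℕ) (hn : 0 < n) (hm : 0 < m)
    (A : Matrix (Fin n) (Fin n) ℝ) (B : Matrix (Fin n) (Fin m) ℝ)
    (Q : Matrix (Fin n) (Fin n) ℝ) (R : Matrix (Fin m) (Fin m) ℝ)
    (hQ : Q.PosSemidef) (hR : R.PosDef)
    (Pstar : Matrix (Fin n) (Fin n) ℝ) (hPstar : Pstar.PosDef)
    (hARE : Aᵀ * Pstar + Pstar * A - Pstar * B * R⁻¹ * Bᵀ * Pstar + Q = 0)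
    (hAstar : IsHurwitz (A - B * R⁻¹ * Bᵀ * Pstar))
    (P P' : Matrix (Fin n) (Fin n) ℝ) (hP : P.IsSymm)
    (hHur : IsHurwitz (A - B * R⁻¹ * Bᵀ * P))
    (hP' : P'.IsSymm)
    (hLyap : (A - B * R⁻¹ * Bᵀ * P)ᵀ * P' + P' * (A - B * R⁻¹ * Bᵀ * P)
        = -(Q + P * B * R⁻¹ * Bᵀ * P)) :
    frobNorm (P' - Pstar)
      ≤ spec2Norm ((1 : Matrix (Fin n) (Fin n) ℝ) ⊗ₖ (A - B * R⁻¹ * Bᵀ * P)ᵀ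
            + (A - B * R⁻¹ * Bᵀ * P)ᵀ ⊗ₖ (1 : Matrix (Fin n) (Fin n) ℝ))⁻¹
          * frobNorm (B * R⁻¹ * Bᵀ) * frobNorm (P - Pstar) ^ 2 :=
  kleinman_step_quadratic_bound_general n m A B Q R hR Pstar hARE P P' hP hHur hLyap
end
end

section
/- (Kleinman's policy iteration) Let K : ℕ → ℝ^{m×n} and P : ℕ → ℝ^{n×n} (indices i ≥ 1, P_i symmetric) satisfy: K₁ is stabilizing; for each i ≥ 1, (A − BK_i)ᵀP_i + P_i(A − BK_i) + Q + K_iᵀRK_i = 0; and K_{i+1} = R⁻¹BᵀP_i. Then: (i) A − BK_i is Hurwitz for every i ≥ 1; (ii) for every i ≥ 1, P_i − P_{i+1} and P_i − P* are positive semidefinite (P₁ ≥ P₂ ≥ ⋯ ≥ P*); (iii) P_i → P* and K_i → K* as i → ∞. -/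
open Matrix MeasureTheory Filter NormedSpace
open scoped Kronecker

noncomputable section

/-!
Two facts about the closed-loop Lyapunov operator
`L_K(P) = (A - BK)ᵀP + P(A - BK) + Q + KᵀRK` carry the argument. Completing the square: if
`RL = BᵀP` then `L_K(P) = L_L(P) + (K - L)ᵀR(K - L)`. And if `X` is Hurwitz, `XᵀD + DX ≤ 0`
forces `D ≥ 0`: the Cayley transform `T = (1 + X)(1 - X)⁻¹` has spectral radius `< 1`, so
`Tᵏ → 0` by Gelfand's formula, while `TᵀDT ≤ D` makes `k ↦ (Tᵏx)ᵀD(Tᵏx)` decrease to `0`.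

Completing the square at `Pᵢ` with `L = Kᵢ₊₁` shows, by an eigenvector argument, that `Kᵢ₊₁`
is stabilizing, and then that `Pᵢ ≥ Pᵢ₊₁`; completing it at `P*` gives `Pᵢ ≥ P*`. The decreasing
sequence `Pᵢ` therefore converges; its limit solves the Riccati equation, and comparing it with
the stabilizing solution `P*` in the same way shows that the limit is `P*`.
-/

open Topology
open scoped MatrixOrder

variable {ι : Type*} [Fintype ι]

theorem tendsto_pow_atTop_nhds_zero_of_forall_nnnorm_lt_one {A : Type*} [NormedRing A]
    [NormedAlgebra ℂ A] [CompleteSpace A] {a : A} (h : ∀ z ∈ spectrum ℂ a, ‖z‖₊ < 1) :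
    Tendsto (a ^ ·) atTop (𝓝 0) := by
  rcases subsingleton_or_nontrivial A with hA | hA
  · simp [Subsingleton.elim _ (0 : A)]
  obtain ⟨r, hρr, hr1⟩ := exists_between (spectrum.spectralRadius_lt_of_forall_lt a h)
  lift r to NNReal using hr1.ne_top
  have hgelfand := spectrum.pow_norm_pow_one_div_tendsto_nhds_spectralRadius a
  have hbound : ∀ᶠ k : ℕ in atTop, ‖a ^ k‖ ≤ (r : ℝ) ^ k := by
    filter_upwards [hgelfand.eventually_lt_const hρr, eventually_ne_atTop 0] with k hk hk0
    rw [ENNReal.ofReal_lt_iff_lt_toReal (by positivity) ENNReal.coe_ne_top,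
      ENNReal.coe_toReal] at hk
    calc ‖a ^ k‖ = (‖a ^ k‖ ^ (1 / k : ℝ)) ^ k := by
          rw [one_div, Real.rpow_inv_natCast_pow (norm_nonneg _) hk0]
      _ ≤ (r : ℝ) ^ k := pow_le_pow_left₀ (by positivity) hk.le k
  exact squeeze_zero_norm' hbound
    (tendsto_pow_atTop_nhds_zero_of_lt_one r.2 (by exact_mod_cast hr1))

theorem dotProduct_transpose_mul_mul_mulVec {κ R : Type*} [Fintype κ] [CommSemiring R]
    (M : Matrix κ ι R) (D : Matrix κ κ R) (w : ι → R) :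
    w ⬝ᵥ ((Mᵀ * D * M) *ᵥ w) = (M *ᵥ w) ⬝ᵥ (D *ᵥ (M *ᵥ w)) := by
  rw [← mulVec_mulVec, ← mulVec_mulVec, dotProduct_mulVec, vecMul_transpose]

theorem re_star_dotProduct_map_mulVec (M : Matrix ι ι ℝ) (v : ι → ℂ) :
    (star v ⬝ᵥ (M.map (algebraMap ℝ ℂ) *ᵥ v)).re =
      (fun i => (v i).re) ⬝ᵥ (M *ᵥ fun i => (v i).re) +
        (fun i => (v i).im) ⬝ᵥ (M *ᵥ fun i => (v i).im) := by
  simp only [dotProduct, mulVec, Complex.re_sum, Finset.mul_sum, ← Finset.sum_add_distrib]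
  refine Finset.sum_congr rfl fun i _ => Finset.sum_congr rfl fun j _ => ?_
  simp only [Pi.star_apply, Complex.star_def, map_apply, Complex.mul_re, Complex.conj_re,
    Complex.conj_im, Complex.coe_algebraMap, Complex.im_ofReal_mul, Complex.ofReal_re,
    Complex.ofReal_im]
  ring

theorem star_map_mulVec {κ : Type*} (M : Matrix κ ι ℝ) (v : ι → ℂ) :
    star (M.map (algebraMap ℝ ℂ) *ᵥ v) = M.map (algebraMap ℝ ℂ) *ᵥ star v := by
  ext i
  simp [mulVec, dotProduct, Complex.conj_ofReal]

theorem star_dotProduct_map_transpose_mul_mulVec {κ : Type*} [Fintype κ] (M N : Matrix κ ι ℝ)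
    (v : ι → ℂ) :
    star v ⬝ᵥ ((Mᵀ * N).map (algebraMap ℝ ℂ) *ᵥ v) =
      star (M.map (algebraMap ℝ ℂ) *ᵥ v) ⬝ᵥ (N.map (algebraMap ℝ ℂ) *ᵥ v) := by
  rw [Matrix.map_mul, transpose_map, ← mulVec_mulVec, dotProduct_mulVec, vecMul_transpose,
    star_map_mulVec]

theorem Matrix.PosSemidef.re_star_dotProduct_map_mulVec_nonneg {M : Matrix ι ι ℝ}
    (hM : M.PosSemidef) (v : ι → ℂ) : 0 ≤ (star v ⬝ᵥ (M.map (algebraMap ℝ ℂ) *ᵥ v)).re := by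
  rw [re_star_dotProduct_map_mulVec]
  have h := hM.dotProduct_mulVec_nonneg
  simp only [star_trivial] at h
  exact add_nonneg (h _) (h _)

theorem Matrix.PosDef.re_star_dotProduct_map_mulVec_pos {M : Matrix ι ι ℝ} (hM : M.PosDef)
    {v : ι → ℂ} (hv : v ≠ 0) : 0 < (star v ⬝ᵥ (M.map (algebraMap ℝ ℂ) *ᵥ v)).re := by
  rw [re_star_dotProduct_map_mulVec]
  have hre := hM.posSemidef.dotProduct_mulVec_nonneg
  have hpos := fun w (hw : w ≠ 0) => hM.dotProduct_mulVec_pos hw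
  simp only [star_trivial] at hre hpos
  by_cases ha : (fun i => (v i).re) = 0
  · refine add_pos_of_nonneg_of_pos (hre _) (hpos _ fun hb => hv ?_)
    funext i
    exact Complex.ext (congrFun ha i) (congrFun hb i)
  · exact add_pos_of_pos_of_nonneg (hpos _ ha) (hre _)

theorem Matrix.PosSemidef.isSymm {κ : Type*} {M : Matrix κ κ ℝ} (hM : M.PosSemidef) : M.IsSymm :=
  isHermitian_iff_isSymm.1 hM.isHermitian

theorem Matrix.PosSemidef.transpose_mul_mul_same {κ : Type*} [Fintype κ] {M : Matrix κ κ ℝ}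
    (hM : M.PosSemidef) (L : Matrix κ ι ℝ) : (Lᵀ * M * L).PosSemidef := by
  simpa only [conjTranspose_eq_transpose_of_trivial] using hM.conjTranspose_mul_mul_same L

theorem Matrix.isClosed_setOf_posSemidef : IsClosed {M : Matrix ι ι ℝ | M.PosSemidef} := by
  simp only [posSemidef_iff_dotProduct_mulVec, isHermitian_iff_isSymm, IsSymm, star_trivial,
    Set.ofPred_and, Set.ofPred_forall]
  exact (isClosed_eq (by fun_prop) continuous_id).inter
    (isClosed_iInter fun x => isClosed_le continuous_const (by fun_prop))

theorem continuous_frobNorm {κ : Type*} [Fintype κ] :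
    Continuous (frobNorm : Matrix ι κ ℝ → ℝ) := by
  unfold frobNorm
  fun_prop

theorem tendsto_frobNorm_sub {κ : Type*} [Fintype κ] {M : ℕ → Matrix ι κ ℝ} {L : Matrix ι κ ℝ}
    (h : Tendsto M atTop (𝓝 L)) : Tendsto (fun i => frobNorm (M i - L)) atTop (𝓝 0) := by
  have hc : Tendsto (fun i => frobNorm (M i - L)) atTop (𝓝 (frobNorm (L - L))) :=
    ((continuous_frobNorm.comp (continuous_sub_right L)).tendsto L).comp h
  simpa [frobNorm] using hc

section ClosedLoop

variable {κ α : Type*} [Fintype κ] [CommRing α]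

def closedLoopLyapunov (A : Matrix ι ι α) (B : Matrix ι κ α) (Q : Matrix ι ι α)
    (R : Matrix κ κ α) (K : Matrix κ ι α) (P : Matrix ι ι α) : Matrix ι ι α :=
  (A - B * K)ᵀ * P + P * (A - B * K) + Q + Kᵀ * R * K

variable {A Q P P' : Matrix ι ι α} {B : Matrix ι κ α} {R : Matrix κ κ α} {K L : Matrix κ ι α}

theorem closedLoopLyapunov_sub_closedLoopLyapunov :
    closedLoopLyapunov A B Q R K P - closedLoopLyapunov A B Q R K P' =
      (A - B * K)ᵀ * (P - P') + (P - P') * (A - B * K) := by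
  unfold closedLoopLyapunov
  noncomm_ring

theorem closedLoopLyapunov_eq_add (hP : P.IsSymm) (hR : R.IsSymm) (hL : R * L = Bᵀ * P) :
    closedLoopLyapunov A B Q R K P =
      closedLoopLyapunov A B Q R L P + (K - L)ᵀ * R * (K - L) := by
  have hL' : Lᵀ * R = P * B := by
    rw [← hR.eq, ← transpose_mul, hL, transpose_mul, transpose_transpose, hP.eq]
  have h : closedLoopLyapunov A B Q R K P = closedLoopLyapunov A B Q R L P
      + (K - L)ᵀ * R * (K - L) + (K - L)ᵀ * (R * L - Bᵀ * P) + (Lᵀ * R - P * B) * (K - L) := by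
    simp only [closedLoopLyapunov, transpose_sub, transpose_mul, Matrix.sub_mul, Matrix.mul_sub,
      Matrix.mul_assoc]
    abel
  rw [h, hL, hL', sub_self, sub_self, Matrix.mul_zero, Matrix.zero_mul, add_zero, add_zero]

theorem mul_nonsing_inv_mul_mul_cancel_left [DecidableEq κ] (hR : IsUnit R.det)
    (M : Matrix κ ι α) (N : Matrix ι ι α) : R * (R⁻¹ * M * N) = M * N := by
  rw [Matrix.mul_assoc, mul_nonsing_inv_cancel_left _ _ hR]

theorem closedLoopLyapunov_eq_riccati [DecidableEq κ] (hP : P.IsSymm) (hR : R.IsSymm)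
    (hRdet : IsUnit R.det) :
    closedLoopLyapunov A B Q R (R⁻¹ * Bᵀ * P) P = Aᵀ * P + P * A - P * B * R⁻¹ * Bᵀ * P + Q := by
  have hRinv : R⁻¹ᵀ = R⁻¹ := by rw [transpose_nonsing_inv, hR.eq]
  simp only [closedLoopLyapunov, transpose_sub, transpose_mul, transpose_transpose, hRinv, hP.eq,
    Matrix.sub_mul, Matrix.mul_sub, Matrix.mul_assoc, mul_nonsing_inv_cancel_left _ _ hRdet]
  abel

end ClosedLoop

structure IsPolicyIteration {κ : Type*} [Fintype κ] [DecidableEq κ] (A : Matrix ι ι ℝ)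
    (B : Matrix ι κ ℝ) (Q : Matrix ι ι ℝ) (R : Matrix κ κ ℝ) (K : ℕ → Matrix κ ι ℝ)
    (P : ℕ → Matrix ι ι ℝ) : Prop where
  isSymm : ∀ i, 1 ≤ i → (P i).IsSymm
  closedLoopLyapunov_eq_zero : ∀ i, 1 ≤ i → closedLoopLyapunov A B Q R (K i) (P i) = 0
  gain_succ : ∀ i, 1 ≤ i → K (i + 1) = R⁻¹ * Bᵀ * P i

namespace IsPolicyIteration

variable {κ : Type*} [Fintype κ] [DecidableEq κ] {A Q : Matrix ι ι ℝ} {B : Matrix ι κ ℝ}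
  {R : Matrix κ κ ℝ} {K : ℕ → Matrix κ ι ℝ} {P : ℕ → Matrix ι ι ℝ}

theorem mul_gain_succ (h : IsPolicyIteration A B Q R K P) (hR : IsUnit R.det) {i : ℕ}
    (hi : 1 ≤ i) : R * K (i + 1) = Bᵀ * P i := by
  rw [h.gain_succ i hi, mul_nonsing_inv_mul_mul_cancel_left hR]

theorem closedLoopLyapunov_eq_zero_of_tendsto (h : IsPolicyIteration A B Q R K P)
    {P' : Matrix ι ι ℝ} (hP : Tendsto P atTop (𝓝 P')) :
    closedLoopLyapunov A B Q R (R⁻¹ * Bᵀ * P') P' = 0 := by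
  have hc : Continuous fun M : Matrix ι ι ℝ × Matrix ι ι ℝ =>
      closedLoopLyapunov A B Q R (R⁻¹ * Bᵀ * M.1) M.2 := by
    unfold closedLoopLyapunov
    fun_prop
  refine tendsto_nhds_unique_of_eventuallyEq
    ((hc.tendsto (P', P')).comp (hP.prodMk_nhds (hP.comp (tendsto_add_atTop_nat 1))))
    tendsto_const_nhds ?_
  filter_upwards [eventually_ge_atTop 1] with i hi
  simp only [Function.comp_apply, ← h.gain_succ i hi]
  exact h.closedLoopLyapunov_eq_zero _ (by omega)

theorem tendsto_gain (h : IsPolicyIteration A B Q R K P) {Pstar : Matrix ι ι ℝ}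
    (hP : Tendsto P atTop (𝓝 Pstar)) :
    Tendsto K atTop (𝓝 (R⁻¹ * Bᵀ * Pstar)) := by
  rw [← tendsto_add_atTop_iff_nat 1]
  refine (((continuous_const.matrix_mul continuous_id).tendsto Pstar).comp hP).congr' ?_
  filter_upwards [eventually_ge_atTop 1] with i hi using (h.gain_succ i hi).symm

end IsPolicyIteration

variable [DecidableEq ι]

theorem Matrix.exists_tendsto_of_antitone {M : ℕ → Matrix ι ι ℝ} {L : Matrix ι ι ℝ}
    (hM : ∀ i, (M i).IsSymm) (hanti : ∀ i, (M i - M (i + 1)).PosSemidef)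
    (hL : ∀ i, (M i - L).PosSemidef) : ∃ M', Tendsto M atTop (𝓝 M') := by
  have hq : ∀ x, ∃ l, Tendsto (fun i => x ⬝ᵥ (M i *ᵥ x)) atTop (𝓝 l) := fun x => by
    have hx := fun i => (hanti i).dotProduct_mulVec_nonneg x
    have hxL := fun i => (hL i).dotProduct_mulVec_nonneg x
    simp only [star_trivial, sub_mulVec, dotProduct_sub, sub_nonneg] at hx hxL
    exact ⟨_, tendsto_atTop_ciInf (antitone_nat_of_succ_le hx) ⟨_, Set.forall_mem_range.2 hxL⟩⟩
  -- The entries are recovered from the limits of the quadratic forms by polarization.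
  choose q hq using hq
  let e : ι → ι → ℝ := fun j => Pi.single j 1
  refine ⟨Matrix.of fun j k => (q (e j + e k) - q (e j) - q (e k)) / 2,
    tendsto_pi_nhds.2 fun j => tendsto_pi_nhds.2 fun k => ?_⟩
  have hpol : ∀ i, M i j k =
      ((e j + e k) ⬝ᵥ (M i *ᵥ (e j + e k)) - e j ⬝ᵥ (M i *ᵥ e j) - e k ⬝ᵥ (M i *ᵥ e k)) / 2 :=
    fun i => by
      simp only [e, mulVec_add, add_dotProduct, dotProduct_add, mulVec_single_one,
        single_one_dotProduct, col_apply, (hM i).apply k j]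
      ring
  simpa only [hpol, of_apply] using (((hq _).sub (hq _)).sub (hq _)).div_const 2

theorem Matrix.mem_spectrum_iff_exists_mulVec_eq_smul {K : Type*} [Field K] {M : Matrix ι ι K}
    {μ : K} : μ ∈ spectrum K M ↔ ∃ v ≠ 0, M *ᵥ v = μ • v := by
  rw [← Matrix.spectrum_toLin', ← Module.End.hasEigenvalue_iff_mem_spectrum]
  constructor
  · intro h
    obtain ⟨v, hv⟩ := h.exists_hasEigenvector
    exact ⟨v, hv.2, by simpa using hv.apply_eq_smul⟩
  · rintro ⟨v, hv0, hv⟩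
    exact Module.End.hasEigenvalue_of_hasEigenvector
      ⟨Module.End.mem_eigenspace_iff.2 (by simpa using hv), hv0⟩

theorem IsHurwitz.isUnit_one_sub {X : Matrix ι ι ℝ} (hX : IsHurwitz X) : IsUnit (1 - X) := by
  have h1 : (1 : ℂ) ∉ spectrum ℂ (X.map (algebraMap ℝ ℂ)) := fun h =>
    absurd (hX 1 h) (by norm_num)
  have hmap : (algebraMap ℝ ℂ).mapMatrix (1 - X) = 1 - X.map (algebraMap ℝ ℂ) := by
    rw [map_sub, map_one]; rfl
  rw [spectrum.notMem_iff, Algebra.algebraMap_eq_smul_one, one_smul, ← hmap,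
    Matrix.isUnit_iff_isUnit_det, ← RingHom.map_det, isUnit_iff_ne_zero, map_ne_zero] at h1
  exact (Matrix.isUnit_iff_isUnit_det _).2 h1.isUnit

def cayley (X : Matrix ι ι ℝ) : Matrix ι ι ℝ := (1 + X) * (1 - X)⁻¹

theorem IsHurwitz.nnnorm_lt_one_of_mem_spectrum_cayley {X : Matrix ι ι ℝ} (hX : IsHurwitz X)
    {μ : ℂ} (hμ : μ ∈ spectrum ℂ ((cayley X).map (algebraMap ℝ ℂ))) : ‖μ‖₊ < 1 := by
  obtain ⟨v, hv0, hv⟩ := mem_spectrum_iff_exists_mulVec_eq_smul.1 hμ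
  set f := (algebraMap ℝ ℂ).mapMatrix (m := ι)
  set Y := X.map (algebraMap ℝ ℂ)
  set u := f (1 - X)⁻¹ *ᵥ v
  have hf1 : f (1 + X) = 1 + Y := by rw [map_add, map_one]; rfl
  have hf2 : f (1 - X) = 1 - Y := by rw [map_sub, map_one]; rfl
  have hvu : (1 - Y) *ᵥ u = v := by
    rw [mulVec_mulVec, ← hf2, ← map_mul,
      mul_nonsing_inv _ ((isUnit_iff_isUnit_det _).1 hX.isUnit_one_sub), map_one, one_mulVec]
  have hu0 : u ≠ 0 := fun h => hv0 (by rw [← hvu, h, mulVec_zero])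
  -- `u` is an eigenvector of `Y` for `(μ - 1) / (μ + 1)`, whose real part has the sign of
  -- `‖μ‖ ^ 2 - 1`.
  have hYu : (1 + μ) • (Y *ᵥ u) = (μ - 1) • u := by
    have h : (1 + Y) *ᵥ u = μ • ((1 - Y) *ᵥ u) := by
      rw [hvu, ← hv, ← hf1, mulVec_mulVec, ← map_mul]; rfl
    rw [add_mulVec, sub_mulVec, one_mulVec] at h
    linear_combination (norm := module) h
  have hμ1 : 1 + μ ≠ 0 := by
    intro h
    rw [h, zero_smul, eq_comm, smul_eq_zero] at hYu
    exact hYu.elim (fun h' => two_ne_zero (by linear_combination h - h' : (2 : ℂ) = 0)) hu0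
  have heig : Y *ᵥ u = ((μ - 1) / (1 + μ)) • u := by
    rw [div_eq_inv_mul, mul_smul, ← hYu, smul_smul, inv_mul_cancel₀ hμ1, one_smul]
  have hre := hX _ (mem_spectrum_iff_exists_mulVec_eq_smul.2 ⟨u, hu0, heig⟩)
  have hpos : 0 < Complex.normSq (1 + μ) := Complex.normSq_pos.2 hμ1
  rw [Complex.div_re, ← add_div, div_neg_iff] at hre
  have hsq : ‖μ‖ ^ 2 < 1 := by
    rw [Complex.sq_norm, Complex.normSq_apply]
    simp only [Complex.sub_re, Complex.add_re, Complex.sub_im, Complex.add_im, Complex.one_re,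
      Complex.one_im] at hre
    rcases hre with h | h <;> nlinarith
  rw [← NNReal.coe_lt_coe, coe_nnnorm, NNReal.coe_one]
  nlinarith [norm_nonneg μ]

theorem IsHurwitz.tendsto_cayley_pow {X : Matrix ι ι ℝ} (hX : IsHurwitz X) :
    Tendsto (cayley X ^ ·) atTop (𝓝 0) := by
  let : NormedRing (Matrix ι ι ℂ) := Matrix.linftyOpNormedRing
  let : NormedAlgebra ℂ (Matrix ι ι ℂ) := Matrix.linftyOpNormedAlgebra
  have : CompleteSpace (Matrix ι ι ℂ) := FiniteDimensional.complete ℂ _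
  have h := tendsto_pow_atTop_nhds_zero_of_forall_nnnorm_lt_one
    fun μ => hX.nnnorm_lt_one_of_mem_spectrum_cayley (μ := μ)
  have hre : Continuous fun M : Matrix ι ι ℂ => M.map Complex.re := by fun_prop
  convert (hre.tendsto 0).comp h using 2 with k
  · simp only [Function.comp_apply, ← RingHom.mapMatrix_apply, ← map_pow]
    ext i j
    simp
  · simp

theorem cayley_transpose_mul_mul_cayley {X : Matrix ι ι ℝ} (hX : IsUnit (1 - X))
    (D : Matrix ι ι ℝ) :
    (cayley X)ᵀ * D * cayley X = D + 2 • ((1 - X)⁻¹ᵀ * (Xᵀ * D + D * X) * (1 - X)⁻¹) := by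
  have hW : (1 - X) * (1 - X)⁻¹ = 1 := mul_nonsing_inv _ ((isUnit_iff_isUnit_det _).1 hX)
  have hWt : (1 - X)⁻¹ᵀ * (1 - X)ᵀ = 1 := by rw [← transpose_mul, hW, transpose_one]
  calc (cayley X)ᵀ * D * cayley X
      = (1 - X)⁻¹ᵀ * ((1 - X)ᵀ * D * (1 - X) + 2 • (Xᵀ * D + D * X)) * (1 - X)⁻¹ := by
        simp only [cayley, transpose_mul, transpose_add, transpose_sub, transpose_one]
        noncomm_ring
    _ = ((1 - X)⁻¹ᵀ * (1 - X)ᵀ) * D * ((1 - X) * (1 - X)⁻¹)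
          + 2 • ((1 - X)⁻¹ᵀ * (Xᵀ * D + D * X) * (1 - X)⁻¹) := by noncomm_ring
    _ = _ := by rw [hW, hWt, Matrix.one_mul, Matrix.mul_one]

theorem IsHurwitz.posSemidef_of_lyapunov {X D : Matrix ι ι ℝ} (hX : IsHurwitz X)
    (hD : D.IsSymm) (h : (-(Xᵀ * D + D * X)).PosSemidef) : D.PosSemidef := by
  refine posSemidef_iff_dotProduct_mulVec.2 ⟨hD, fun x => ?_⟩
  set W := (1 - X)⁻¹
  let q : (ι → ℝ) → ℝ := fun w => w ⬝ᵥ (D *ᵥ w)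
  have hstep : ∀ w, q (cayley X *ᵥ w) ≤ q w := fun w => by
    have hN := h.dotProduct_mulVec_nonneg (W *ᵥ w)
    simp only [star_trivial, neg_mulVec, dotProduct_neg, Left.nonneg_neg_iff] at hN
    simp only [q]
    rw [← dotProduct_transpose_mul_mul_mulVec, cayley_transpose_mul_mul_cayley hX.isUnit_one_sub,
      add_mulVec, dotProduct_add, smul_mulVec, dotProduct_smul, dotProduct_transpose_mul_mul_mulVec]
    simp only [nsmul_eq_mul]
    linarith
  have hanti : Antitone fun k => q ((cayley X ^ k) *ᵥ x) :=
    antitone_nat_of_succ_le fun k => by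
      simpa only [pow_succ', ← mulVec_mulVec] using hstep _
  have hlim : Tendsto (fun k => q ((cayley X ^ k) *ᵥ x)) atTop (𝓝 (q ((0 : Matrix ι ι ℝ) *ᵥ x))) :=
    ((by fun_prop : Continuous fun M : Matrix ι ι ℝ => q (M *ᵥ x)).tendsto 0).comp
      hX.tendsto_cayley_pow
  simpa [q] using hanti.le_of_tendsto hlim 0

theorem IsHurwitz.of_lyapunov {κ : Type*} [Fintype κ] {X P S : Matrix ι ι ℝ}
    {C : Matrix κ ι ℝ} {R : Matrix κ κ ℝ} {E : Matrix ι κ ℝ} (hP : P.PosDef) (hS : S.PosSemidef)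
    (hR : R.PosDef) (h : Xᵀ * P + P * X + S + Cᵀ * R * C = 0) (hXE : IsHurwitz (X + E * C)) :
    IsHurwitz X := by
  intro μ hμ
  obtain ⟨v, hv0, hv⟩ := mem_spectrum_iff_exists_mulVec_eq_smul.1 hμ
  have hp := hP.re_star_dotProduct_map_mulVec_pos hv0
  have hs := hS.re_star_dotProduct_map_mulVec_nonneg v
  have key : 2 * μ.re * (star v ⬝ᵥ (P.map (algebraMap ℝ ℂ) *ᵥ v)).re
      + (star v ⬝ᵥ (S.map (algebraMap ℝ ℂ) *ᵥ v)).re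
      + (star (C.map (algebraMap ℝ ℂ) *ᵥ v) ⬝ᵥ
          (R.map (algebraMap ℝ ℂ) *ᵥ (C.map (algebraMap ℝ ℂ) *ᵥ v))).re = 0 := by
    have h0 := congrArg (fun M => (star v ⬝ᵥ ((algebraMap ℝ ℂ).mapMatrix M *ᵥ v)).re) h
    simp only [map_add, map_zero, add_mulVec, zero_mulVec, dotProduct_add, dotProduct_zero,
      Complex.add_re, Complex.zero_re, RingHom.mapMatrix_apply] at h0
    rw [Matrix.mul_assoc Cᵀ, star_dotProduct_map_transpose_mul_mulVec,
      star_dotProduct_map_transpose_mul_mulVec] at h0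
    simp only [Matrix.map_mul, ← mulVec_mulVec, hv, star_smul, smul_dotProduct, mulVec_smul,
      dotProduct_smul, smul_eq_mul, Complex.mul_re, Complex.star_def, Complex.conj_re,
      Complex.conj_im] at h0
    linarith
  -- If `0 ≤ re μ`, this forces `Cv = 0`, so `v` is also an eigenvector of `X + EC`.
  by_contra hμ0
  have hw : C.map (algebraMap ℝ ℂ) *ᵥ v = 0 := by
    by_contra hw
    have := hR.re_star_dotProduct_map_mulVec_pos hw
    nlinarith
  refine hμ0 (hXE μ (mem_spectrum_iff_exists_mulVec_eq_smul.2 ⟨v, hv0, ?_⟩))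
  rw [Matrix.map_add _ (map_add _), Matrix.map_mul, add_mulVec, ← mulVec_mulVec, hw, mulVec_zero,
    add_zero, hv]

section PolicyIteration

variable {κ : Type*} [Fintype κ] {A Q P P' S : Matrix ι ι ℝ} {B : Matrix ι κ ℝ}
  {R : Matrix κ κ ℝ} {K L : Matrix κ ι ℝ}

theorem posSemidef_sub_of_closedLoopLyapunov_add_eq (hK : IsHurwitz (A - B * K))
    (hP : P.IsSymm) (hP' : P'.IsSymm) (hS : S.PosSemidef)
    (h : closedLoopLyapunov A B Q R K P + S = closedLoopLyapunov A B Q R K P') :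
    (P - P').PosSemidef := by
  refine hK.posSemidef_of_lyapunov (hP.sub hP') ?_
  rwa [← closedLoopLyapunov_sub_closedLoopLyapunov, neg_sub, ← h, add_sub_cancel_left]

theorem posSemidef_sub_of_closedLoopLyapunov_eq_zero (hR : R.PosSemidef)
    (hK : IsHurwitz (A - B * K)) (hP : P.IsSymm) (hP' : P'.IsSymm) (hL : R * L = Bᵀ * P')
    (hKP : closedLoopLyapunov A B Q R K P = 0) (hLP' : closedLoopLyapunov A B Q R L P' = 0) :
    (P - P').PosSemidef :=
  posSemidef_sub_of_closedLoopLyapunov_add_eq hK hP hP' (hR.transpose_mul_mul_same (K - L)) <| by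
    rw [closedLoopLyapunov_eq_add hP' hR.isSymm hL, hKP, hLP']

theorem IsHurwitz.of_closedLoopLyapunov_eq_zero (hK : IsHurwitz (A - B * K))
    (hQ : Q.PosSemidef) (hR : R.PosDef) (hP : P.PosDef) (hL : R * L = Bᵀ * P)
    (hKP : closedLoopLyapunov A B Q R K P = 0) : IsHurwitz (A - B * L) := by
  have h := closedLoopLyapunov_eq_add (K := K) (Q := Q) (A := A)
    hP.posSemidef.isSymm hR.posSemidef.isSymm hL
  rw [hKP, closedLoopLyapunov, add_assoc _ Q] at h
  refine IsHurwitz.of_lyapunov (E := -B) hP (hQ.add (hR.posSemidef.transpose_mul_mul_same L)) hR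
    h.symm ?_
  convert hK using 1
  rw [Matrix.neg_mul, Matrix.mul_sub]
  abel

namespace IsPolicyIteration

variable [DecidableEq κ] {K : ℕ → Matrix κ ι ℝ} {P : ℕ → Matrix ι ι ℝ} {Pstar : Matrix ι ι ℝ}

theorem isHurwitz_and_posSemidef_sub (h : IsPolicyIteration A B Q R K P) (hQ : Q.PosSemidef)
    (hR : R.PosDef) (hPstar : Pstar.PosDef)
    (hARE : closedLoopLyapunov A B Q R (R⁻¹ * Bᵀ * Pstar) Pstar = 0)
    (hK1 : IsHurwitz (A - B * K 1)) :
    ∀ i, 1 ≤ i → IsHurwitz (A - B * K i) ∧ (P i - Pstar).PosSemidef := by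
  have hRdet := hR.det_pos.ne'.isUnit
  have hge : ∀ i, 1 ≤ i → IsHurwitz (A - B * K i) → (P i - Pstar).PosSemidef := fun i hi hK =>
    posSemidef_sub_of_closedLoopLyapunov_eq_zero hR.posSemidef hK (h.isSymm i hi)
      hPstar.posSemidef.isSymm (mul_nonsing_inv_mul_mul_cancel_left hRdet _ _)
      (h.closedLoopLyapunov_eq_zero i hi) hARE
  intro i hi
  induction i, hi using Nat.le_induction with
  | base => exact ⟨hK1, hge 1 le_rfl hK1⟩
  | succ i hi ih =>
    have hPi : (P i).PosDef := by simpa using hPstar.add_posSemidef ih.2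
    have hK := ih.1.of_closedLoopLyapunov_eq_zero hQ hR hPi (h.mul_gain_succ hRdet hi)
      (h.closedLoopLyapunov_eq_zero i hi)
    exact ⟨hK, hge _ (by omega) hK⟩

theorem posSemidef_sub_succ (h : IsPolicyIteration A B Q R K P) (hR : R.PosDef)
    (hK : ∀ i, 1 ≤ i → IsHurwitz (A - B * K i)) :
    ∀ i, 1 ≤ i → (P i - P (i + 1)).PosSemidef := by
  intro i hi
  refine posSemidef_sub_of_closedLoopLyapunov_add_eq (Q := Q) (R := R) (hK (i + 1) (by omega))
    (h.isSymm i hi) (h.isSymm _ (by omega))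
    (hR.posSemidef.transpose_mul_mul_same (K i - K (i + 1))) ?_
  rw [← closedLoopLyapunov_eq_add (h.isSymm i hi) hR.posSemidef.isSymm
      (h.mul_gain_succ hR.det_pos.ne'.isUnit hi),
    h.closedLoopLyapunov_eq_zero i hi, h.closedLoopLyapunov_eq_zero (i + 1) (by omega)]

theorem tendsto_value (h : IsPolicyIteration A B Q R K P) (hR : R.PosDef)
    (hPstar : Pstar.IsSymm) (hARE : closedLoopLyapunov A B Q R (R⁻¹ * Bᵀ * Pstar) Pstar = 0)
    (hAstar : IsHurwitz (A - B * (R⁻¹ * Bᵀ * Pstar)))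
    (hanti : ∀ i, 1 ≤ i → (P i - P (i + 1)).PosSemidef)
    (hge : ∀ i, 1 ≤ i → (P i - Pstar).PosSemidef) : Tendsto P atTop (𝓝 Pstar) := by
  obtain ⟨P', hP'⟩ := exists_tendsto_of_antitone (M := fun i => P (i + 1))
    (fun i => h.isSymm _ (by omega)) (fun i => hanti _ (by omega)) (fun i => hge _ (by omega))
  rw [tendsto_add_atTop_iff_nat 1] at hP'
  have hge' : (P' - Pstar).PosSemidef := isClosed_setOf_posSemidef.mem_of_tendsto
    (hP'.sub_const Pstar) (eventually_atTop.2 ⟨1, hge⟩)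
  have hle' : (Pstar - P').PosSemidef :=
    posSemidef_sub_of_closedLoopLyapunov_eq_zero hR.posSemidef hAstar hPstar
      (by simpa using hge'.isSymm.add hPstar)
      (mul_nonsing_inv_mul_mul_cancel_left hR.det_pos.ne'.isUnit _ _) hARE
      (h.closedLoopLyapunov_eq_zero_of_tendsto hP')
  rwa [le_antisymm (Matrix.le_iff.2 hle') (Matrix.le_iff.2 hge')] at hP'

end IsPolicyIteration

end PolicyIteration

attribute [local instance] Matrix.normedAddCommGroup Matrix.normedSpace

theorem kleinman_policy_iteration_general
    (n m : ℕ)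
    (A : Matrix (Fin n) (Fin n) ℝ) (B : Matrix (Fin n) (Fin m) ℝ)
    (Q : Matrix (Fin n) (Fin n) ℝ) (R : Matrix (Fin m) (Fin m) ℝ)
    (hQ : Q.PosSemidef) (hR : R.PosDef)
    (Pstar : Matrix (Fin n) (Fin n) ℝ) (hPstar : Pstar.PosDef)
    (hARE : Aᵀ * Pstar + Pstar * A - Pstar * B * R⁻¹ * Bᵀ * Pstar + Q = 0)
    (hAstar : IsHurwitz (A - B * R⁻¹ * Bᵀ * Pstar))
    (K : ℕ → Matrix (Fin m) (Fin n) ℝ) (P : ℕ → Matrix (Fin n) (Fin n) ℝ)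
    (hK1 : IsHurwitz (A - B * K 1))
    (hPsymm : ∀ i, 1 ≤ i → (P i).IsSymm)
    (hPE : ∀ i, 1 ≤ i →
      (A - B * K i)ᵀ * P i + P i * (A - B * K i) + Q + (K i)ᵀ * R * (K i) = 0)
    (hPI : ∀ i, 1 ≤ i → K (i + 1) = R⁻¹ * Bᵀ * P i) :
    (∀ i, 1 ≤ i → IsHurwitz (A - B * K i)) ∧
    (∀ i, 1 ≤ i → (P i - P (i + 1)).PosSemidef ∧ (P i - Pstar).PosSemidef) ∧
    Tendsto (fun i => frobNorm (P i - Pstar)) atTop (nhds 0) ∧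
    Tendsto (fun i => frobNorm (K i - R⁻¹ * Bᵀ * Pstar)) atTop (nhds 0) := by
  have hiter : IsPolicyIteration A B Q R K P := ⟨hPsymm, hPE, hPI⟩
  have hPstarSymm := hPstar.posSemidef.isSymm
  have hRiccati : closedLoopLyapunov A B Q R (R⁻¹ * Bᵀ * Pstar) Pstar = 0 :=
    (closedLoopLyapunov_eq_riccati hPstarSymm hR.posSemidef.isSymm
      hR.det_pos.ne'.isUnit).trans hARE
  have hstab := hiter.isHurwitz_and_posSemidef_sub hQ hR hPstar hRiccati hK1
  have hanti := hiter.posSemidef_sub_succ hR fun i hi => (hstab i hi).1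
  have hP := hiter.tendsto_value hR hPstarSymm hRiccati
    (by simpa only [Matrix.mul_assoc] using hAstar) hanti fun i hi => (hstab i hi).2
  exact ⟨fun i hi => (hstab i hi).1, fun i hi => ⟨hanti i hi, (hstab i hi).2⟩,
    tendsto_frobNorm_sub hP, tendsto_frobNorm_sub (hiter.tendsto_gain hP)⟩

/-- Kleinman's policy iteration: every iterate is stabilizing, the value
matrices decrease monotonically to `P*`, and the gains converge to `K*`. -/
theorem kleinman_policy_iteration
    (n m : ℕ) (hn : 0 < n) (hm : 0 < m)
    (A : Matrix (Fin n) (Fin n) ℝ) (B : Matrix (Fin n) (Fin m) ℝ)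
    (Q : Matrix (Fin n) (Fin n) ℝ) (R : Matrix (Fin m) (Fin m) ℝ)
    (hQ : Q.PosSemidef) (hR : R.PosDef)
    (Pstar : Matrix (Fin n) (Fin n) ℝ) (hPstar : Pstar.PosDef)
    (hARE : Aᵀ * Pstar + Pstar * A - Pstar * B * R⁻¹ * Bᵀ * Pstar + Q = 0)
    (hAstar : IsHurwitz (A - B * R⁻¹ * Bᵀ * Pstar))
    (K : ℕ → Matrix (Fin m) (Fin n) ℝ) (P : ℕ → Matrix (Fin n) (Fin n) ℝ)
    (hK1 : IsHurwitz (A - B * K 1))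
    (hPsymm : ∀ i, 1 ≤ i → (P i).IsSymm)
    (hPE : ∀ i, 1 ≤ i →
      (A - B * K i)ᵀ * P i + P i * (A - B * K i) + Q + (K i)ᵀ * R * (K i) = 0)
    (hPI : ∀ i, 1 ≤ i → K (i + 1) = R⁻¹ * Bᵀ * P i) :
    (∀ i, 1 ≤ i → IsHurwitz (A - B * K i)) ∧
    (∀ i, 1 ≤ i → (P i - P (i + 1)).PosSemidef ∧ (P i - Pstar).PosSemidef) ∧
    Tendsto (fun i => frobNorm (P i - Pstar)) atTop (nhds 0) ∧
    Tendsto (fun i => frobNorm (K i - R⁻¹ * Bᵀ * Pstar)) atTop (nhds 0) :=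
  kleinman_policy_iteration_general n m A B Q R hQ hR Pstar hPstar hARE hAstar K P hK1 hPsymm hPE
    hPI
end
end

section
/- Let K ∈ ℝ^{m×n} be stabilizing and let P ∈ ℝ^{n×n} be the unique symmetric solution of the policy-evaluation equation (A − BK)ᵀP + P(A − BK) + Q + KᵀRK = 0. Then the Riccati residual Q + AᵀP + PA − P B R⁻¹ Bᵀ P is negative semidefinite. -/
open Matrix MeasureTheory Filter NormedSpace
open scoped Kronecker

noncomputable section

attribute [local instance] Matrix.normedAddCommGroup Matrix.normedSpace

/-- the Riccati residual of a policy-evaluation solution is negative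
semidefinite. -/
theorem policy_evaluation_riccati_residual_negSemidef
    (n m : ℕ) (hn : 0 < n) (hm : 0 < m)
    (A : Matrix (Fin n) (Fin n) ℝ) (B : Matrix (Fin n) (Fin m) ℝ)
    (Q : Matrix (Fin n) (Fin n) ℝ) (R : Matrix (Fin m) (Fin m) ℝ)
    (hQ : Q.PosSemidef) (hR : R.PosDef)
    (K : Matrix (Fin m) (Fin n) ℝ) (hK : IsHurwitz (A - B * K))
    (P : Matrix (Fin n) (Fin n) ℝ) (hP : P.IsSymm)
    (hPE : (A - B * K)ᵀ * P + P * (A - B * K) + Q + Kᵀ * R * K = 0) :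
    (-(Q + Aᵀ * P + P * A - P * B * R⁻¹ * Bᵀ * P)).PosSemidef := by
  have hd : IsUnit R.det := isUnit_iff_ne_zero.mpr hR.det_pos.ne'
  have hs : Rᵀ = R := hR.isHermitian.eq
  have hinvT : R⁻¹ᵀ = R⁻¹ := by rw [Matrix.transpose_nonsing_inv, hs]
  have h1 : ∀ X : Matrix (Fin m) (Fin n) ℝ, R * (R⁻¹ * X) = X := fun X => by
    rw [← Matrix.mul_assoc, Matrix.mul_nonsing_inv R hd, Matrix.one_mul]
  have h2 : ∀ X : Matrix (Fin m) (Fin n) ℝ, R⁻¹ * (R * X) = X := fun X => by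
    rw [← Matrix.mul_assoc, Matrix.nonsing_inv_mul R hd, Matrix.one_mul]
  set L : Matrix (Fin m) (Fin n) ℝ := K - R⁻¹ * (Bᵀ * P) with hL
  have hQeq : Q = -((A - B * K)ᵀ * P + P * (A - B * K) + Kᵀ * R * K) := by
    rw [eq_neg_iff_add_eq_zero, ← hPE]; abel
  have key : -(Q + Aᵀ * P + P * A - P * B * R⁻¹ * Bᵀ * P) = Lᵀ * R * L := by
    rw [hQeq, hL]
    simp only [Matrix.transpose_sub, Matrix.transpose_mul, Matrix.transpose_transpose,
      hinvT, hP.eq, Matrix.sub_mul, Matrix.mul_sub, Matrix.mul_assoc, h1, h2]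
    abel
  rw [key]
  have := hR.posSemidef.conjTranspose_mul_mul_same L
  simpa using this
end
end
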